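/- Under pair Sato-Tate equidistribution for (C, D) and with a(p) = C(p) - χ₁(p)/(2√p), b(p) = D(p) - χ₂(p)/(2√p) as above, the set of primes p with a(p)·b(p) > 0 has natural density 1/2, and the set of primes with a(p)·b(p) = 0 has natural density 0. -/

import Mathlib

open MeasureTheory Filter Real Set

noncomputable def muST : Measure ℝ :=
  (volume.restrict (Icc (-1 : ℝ) 1)).withDensity fun t =>
    ENNReal.ofReal ((2 / π) * Real.sqrt (1 - t ^ 2))

open scoped Classical in
noncomputable def primeCount (S : Set ℕ) (x : ℕ) : ℕ :=
  ((Finset.range (x + 1)).filter fun p => p.Prime ∧ p ∈ S).card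

noncomputable def primePi (x : ℕ) : ℕ :=
  ((Finset.range (x + 1)).filter Nat.Prime).card

def HasNaturalDensity (S : Set ℕ) (δ : ℝ) : Prop :=
  Tendsto (fun x : ℕ => (primeCount S x : ℝ) / (primePi x : ℝ)) atTop (nhds δ)

def PairSatoTateEquidistributed (C D : ℕ → ℝ) : Prop :=
  ∀ a₁ b₁ a₂ b₂ : ℝ, -1 ≤ a₁ → a₁ ≤ b₁ → b₁ ≤ 1 → -1 ≤ a₂ → a₂ ≤ b₂ → b₂ ≤ 1 →
    Tendsto
      (fun x : ℕ =>
        (primeCount {p | C p ∈ Icc a₁ b₁ ∧ D p ∈ Icc a₂ b₂} x : ℝ) / (primePi x : ℝ))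
      atTop (nhds ((muST (Icc a₁ b₁)).toReal * (muST (Icc a₂ b₂)).toReal))

/-! Write `a = C - e₁`, `b = D - e₂` with `eᵢ(p) = χᵢ(p)/(2√p) → 0`. Fix `ε > 0`. For large `p`,
`|eᵢ(p)| < ε`, so `ab > 0` on the primes where `(C, D)` lies in `[ε,1]² ∪ [-1,-ε]²` and `ab < 0`
where it lies in `[ε,1] × [-1,-ε] ∪ [-1,-ε] × [ε,1]`. By pair equidistribution and the symmetry
of `μ_ST`, each of these two sets has density `2 μ_ST([ε,1])²`, which tends to `1/2` as `ε → 0`.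
The first set bounds the proportion of `ab > 0` from below, the second (inside the complement)
from above. Both sets avoid `ab = 0`, whose proportion is thus at most `1 - 4 μ_ST([ε,1])² → 0`. -/

open Topology

lemma primePi_eq_primeCounting (x : ℕ) : primePi x = Nat.primeCounting x :=
  Nat.primesLE_card_eq_primeCounting x

lemma primeCount_eq_card_filter_primesLE (S : Set ℕ) (x : ℕ) [DecidablePred (· ∈ S)] :
    primeCount S x = ((Nat.primesLE x).filter (· ∈ S)).card := by
  rw [primeCount, Nat.primesLE, Nat.primesBelow, Finset.filter_filter]
  congr 1
  exact Finset.filter_congr_decidable _ _ _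

lemma primeCount_add_primeCount_compl (S : Set ℕ) (x : ℕ) :
    primeCount S x + primeCount Sᶜ x = primePi x := by
  classical
  rw [primeCount_eq_card_filter_primesLE, primeCount_eq_card_filter_primesLE]
  exact Finset.card_filter_add_card_filter_not _

lemma primeCount_union_of_disjoint {S T : Set ℕ} (h : Disjoint S T) (x : ℕ) :
    primeCount (S ∪ T) x = primeCount S x + primeCount T x := by
  classical
  simp only [primeCount_eq_card_filter_primesLE, Set.mem_union, Finset.filter_or]
  exact Finset.card_union_of_disjoint (Finset.disjoint_filter_filter' _ _ h)

lemma exists_primeCount_le_add {S T : Set ℕ} (h : ∀ᶠ p in atTop, p.Prime → p ∈ S → p ∈ T) :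
    ∃ N : ℕ, ∀ x, primeCount S x ≤ primeCount T x + N := by
  classical
  obtain ⟨N, hN⟩ := eventually_atTop.1 h
  refine ⟨N, fun x => ?_⟩
  simp only [primeCount_eq_card_filter_primesLE]
  calc ((Nat.primesLE x).filter (· ∈ S)).card
      ≤ ((Nat.primesLE x).filter (· ∈ T) ∪ Finset.range N).card := by
        refine Finset.card_le_card fun p hp => ?_
        simp only [Finset.mem_filter, Finset.mem_union, Finset.mem_range] at hp ⊢
        by_cases hpN : N ≤ p
        · exact .inl ⟨hp.1, hN p hpN (Nat.prime_of_mem_primesLE hp.1) hp.2⟩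
        · exact .inr (not_le.1 hpN)
    _ ≤ _ := (Finset.card_union_le _ _).trans_eq (by rw [Finset.card_range])

lemma tendsto_primePi_atTop : Tendsto (fun x => (primePi x : ℝ)) atTop atTop := by
  simp only [primePi_eq_primeCounting]
  exact tendsto_natCast_atTop_atTop.comp Nat.tendsto_primeCounting

noncomputable def primeProportion (S : Set ℕ) (x : ℕ) : ℝ := primeCount S x / primePi x

lemma primeProportion_nonneg (S : Set ℕ) (x : ℕ) : 0 ≤ primeProportion S x := by
  unfold primeProportion; positivity

lemma primeProportion_add_primeProportion_compl (S : Set ℕ) {x : ℕ} (hx : primePi x ≠ 0) :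
    primeProportion S x + primeProportion Sᶜ x = 1 := by
  rw [primeProportion, primeProportion, ← add_div, div_eq_one_iff_eq (by exact_mod_cast hx)]
  exact_mod_cast primeCount_add_primeCount_compl S x

lemma HasNaturalDensity.union {S T : Set ℕ} {α β : ℝ} (hS : HasNaturalDensity S α)
    (hT : HasNaturalDensity T β) (h : Disjoint S T) : HasNaturalDensity (S ∪ T) (α + β) := by
  refine (hS.add hT).congr fun x => ?_
  rw [primeCount_union_of_disjoint h, Nat.cast_add, add_div]

lemma HasNaturalDensity.eventually_lt_primeProportion {L S : Set ℕ} {α : ℝ}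
    (hL : HasNaturalDensity L α) (hLS : ∀ᶠ p in atTop, p.Prime → p ∈ L → p ∈ S) {a : ℝ}
    (ha : a < α) : ∀ᶠ x in atTop, a < primeProportion S x := by
  obtain ⟨N, hN⟩ := exists_primeCount_le_add hLS
  have hlim : Tendsto (fun x => (primeCount L x - N : ℝ) / primePi x) atTop (𝓝 α) := by
    simpa only [sub_div, sub_zero] using
      hL.sub (tendsto_const_nhds.div_atTop tendsto_primePi_atTop)
  filter_upwards [hlim.eventually_const_lt ha, tendsto_primePi_atTop.eventually_gt_atTop 0]
    with x hax hx
  refine hax.trans_le (div_le_div_of_nonneg_right ?_ hx.le)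
  rw [sub_le_iff_le_add]
  exact_mod_cast hN x

lemma HasNaturalDensity.eventually_primeProportion_lt {L S : Set ℕ} {α : ℝ}
    (hL : HasNaturalDensity L α) (hLS : ∀ᶠ p in atTop, p.Prime → p ∈ L → p ∉ S) {b : ℝ}
    (hb : 1 - α < b) : ∀ᶠ x in atTop, primeProportion S x < b := by
  filter_upwards [hL.eventually_lt_primeProportion (S := Sᶜ) hLS (a := 1 - b) (by linarith),
    tendsto_primePi_atTop.eventually_gt_atTop 0] with x hx hpos
  have := primeProportion_add_primeProportion_compl S (x := x) (by exact_mod_cast hpos.ne')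
  linarith

lemma hasNaturalDensity_of_squeeze {ι : Type*} {F : Filter ι} [F.NeBot] {S : Set ℕ} {δ : ℝ}
    {l u : ι → ℝ} (hl : Tendsto l F (𝓝 δ)) (hu : Tendsto u F (𝓝 δ))
    (hlow : ∀ᶠ i in F, ∀ a < l i, ∀ᶠ x in atTop, a < primeProportion S x)
    (hup : ∀ᶠ i in F, ∀ b > u i, ∀ᶠ x in atTop, primeProportion S x < b) :
    HasNaturalDensity S δ := by
  refine tendsto_order.2 ⟨fun a ha => ?_, fun b hb => ?_⟩
  · obtain ⟨i, hi, hai⟩ := (hlow.and (hl.eventually_const_lt ha)).exists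
    exact hi a hai
  · obtain ⟨i, hi, hbi⟩ := (hup.and (hu.eventually_lt_const hb)).exists
    exact hi b hbi

noncomputable def satoTateDensity (t : ℝ) : ℝ := (2 / π) * √(1 - t ^ 2)

lemma continuous_satoTateDensity : Continuous satoTateDensity := by
  unfold satoTateDensity; fun_prop

lemma muST_Icc_toReal {a b : ℝ} (ha : -1 ≤ a) (hab : a ≤ b) (hb : b ≤ 1) :
    (muST (Icc a b)).toReal = ∫ t in a..b, satoTateDensity t := by
  rw [intervalIntegral.integral_of_le hab, ← integral_Icc_eq_integral_Ioc,
    integral_eq_lintegral_of_nonneg_ae (.of_forall fun t => by unfold satoTateDensity; positivity)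
      continuous_satoTateDensity.aestronglyMeasurable,
    muST, withDensity_apply _ measurableSet_Icc, Measure.restrict_restrict measurableSet_Icc,
    inter_eq_left.2 (Icc_subset_Icc ha hb)]
  rfl

lemma muST_Icc_neg_toReal {a b : ℝ} (ha : -1 ≤ a) (hab : a ≤ b) (hb : b ≤ 1) :
    (muST (Icc (-b) (-a))).toReal = (muST (Icc a b)).toReal := by
  rw [muST_Icc_toReal (by linarith) (by linarith) (by linarith), muST_Icc_toReal ha hab hb,
    ← intervalIntegral.integral_comp_neg]
  simp only [satoTateDensity, neg_sq]

lemma integral_satoTateDensity_zero_one : ∫ t in (0 : ℝ)..1, satoTateDensity t = 1 / 2 := by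
  have hsymm : ∫ t in (-1 : ℝ)..0, satoTateDensity t = ∫ t in (0 : ℝ)..1, satoTateDensity t := by
    have h := muST_Icc_neg_toReal (a := 0) (b := 1) (by norm_num) (by norm_num) le_rfl
    rwa [neg_zero, muST_Icc_toReal le_rfl (by norm_num) (by norm_num),
      muST_Icc_toReal (by norm_num) (by norm_num) le_rfl] at h
  have htotal : ∫ t in (-1 : ℝ)..1, satoTateDensity t = 1 := by
    simp only [satoTateDensity, intervalIntegral.integral_const_mul, integral_sqrt_one_sub_sq]
    field_simp
  have hc := continuous_satoTateDensity.intervalIntegrable (μ := volume)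
  rw [← intervalIntegral.integral_add_adjacent_intervals (hc (-1) 0) (hc 0 1), hsymm] at htotal
  linarith

lemma tendsto_muST_Icc_one :
    Tendsto (fun ε => (muST (Icc ε 1)).toReal) (𝓝[>] 0) (𝓝 (1 / 2)) := by
  have hcont : Continuous fun ε => ∫ t in ε..1, satoTateDensity t :=
    (intervalIntegral.continuous_primitive
      (fun a b => continuous_satoTateDensity.intervalIntegrable a b) 1).neg.congr
      fun ε => (intervalIntegral.integral_symm 1 ε).symm
  refine ((integral_satoTateDensity_zero_one ▸ hcont.tendsto 0).mono_left
    nhdsWithin_le_nhds).congr' ?_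
  filter_upwards [Ioo_mem_nhdsGT one_pos] with ε hε
  exact (muST_Icc_toReal (by linarith [hε.1]) hε.2.le le_rfl).symm

lemma tendsto_div_two_sqrt_atTop {χ : ℕ → ℝ} (hχ : ∀ p, |χ p| ≤ 1) :
    Tendsto (fun p : ℕ => χ p / (2 * √p)) atTop (𝓝 0) := by
  have hlim : Tendsto (fun p : ℕ => (2 * √p)⁻¹) atTop (𝓝 0) :=
    tendsto_inv_atTop_zero.comp <|
      (tendsto_sqrt_atTop.comp tendsto_natCast_atTop_atTop).const_mul_atTop two_pos
  refine squeeze_zero_norm (fun p => ?_) hlim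
  rw [Real.norm_eq_abs, abs_div, abs_of_nonneg (by positivity : (0 : ℝ) ≤ 2 * √p), div_eq_mul_inv]
  exact mul_le_of_le_one_left (by positivity) (hχ p)

lemma eventually_sub_pos_and_sub_neg {α : Type*} {l : Filter α} {f g : α → ℝ}
    (hg : Tendsto g l (𝓝 0)) {ε : ℝ} (hε : 0 < ε) :
    ∀ᶠ p in l, (ε ≤ f p → 0 < f p - g p) ∧ (f p ≤ -ε → f p - g p < 0) := by
  filter_upwards [hg (Ioo_mem_nhds (neg_lt_zero.2 hε) hε)] with p hp
  exact ⟨fun h => by linarith [hp.2], fun h => by linarith [hp.1]⟩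

def sameSignSet (C D : ℕ → ℝ) (ε : ℝ) : Set ℕ :=
  {p | C p ∈ Icc ε 1 ∧ D p ∈ Icc ε 1} ∪ {p | C p ∈ Icc (-1) (-ε) ∧ D p ∈ Icc (-1) (-ε)}

def oppositeSignSet (C D : ℕ → ℝ) (ε : ℝ) : Set ℕ :=
  {p | C p ∈ Icc ε 1 ∧ D p ∈ Icc (-1) (-ε)} ∪ {p | C p ∈ Icc (-1) (-ε) ∧ D p ∈ Icc ε 1}

section SignSets

variable {C D : ℕ → ℝ} {ε : ℝ}

lemma disjoint_sameSignSet_oppositeSignSet (hε : 0 < ε) :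
    Disjoint (sameSignSet C D ε) (oppositeSignSet C D ε) := by
  refine Set.disjoint_left.2 fun p hs ho => ?_
  rcases hs with ⟨⟨hC, -⟩, hD, -⟩ | ⟨⟨-, hC⟩, -, hD⟩ <;>
    rcases ho with ⟨⟨hC', -⟩, -, hD'⟩ | ⟨⟨-, hC'⟩, hD', -⟩ <;> linarith

lemma eventually_mul_sub_pos_and_neg {e₁ e₂ : ℕ → ℝ} (h₁ : Tendsto e₁ atTop (𝓝 0))
    (h₂ : Tendsto e₂ atTop (𝓝 0)) (hε : 0 < ε) :
    ∀ᶠ p in atTop, (p ∈ sameSignSet C D ε → 0 < (C p - e₁ p) * (D p - e₂ p)) ∧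
      (p ∈ oppositeSignSet C D ε → (C p - e₁ p) * (D p - e₂ p) < 0) := by
  filter_upwards [eventually_sub_pos_and_sub_neg (f := C) h₁ hε,
    eventually_sub_pos_and_sub_neg (f := D) h₂ hε] with p ⟨hCpos, hCneg⟩ ⟨hDpos, hDneg⟩
  constructor
  · rintro (⟨⟨hC, -⟩, hD, -⟩ | ⟨⟨-, hC⟩, -, hD⟩)
    exacts [mul_pos (hCpos hC) (hDpos hD), mul_pos_of_neg_of_neg (hCneg hC) (hDneg hD)]
  · rintro (⟨⟨hC, -⟩, -, hD⟩ | ⟨⟨-, hC⟩, hD, -⟩)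
    exacts [mul_neg_of_pos_of_neg (hCpos hC) (hDneg hD),
      mul_neg_of_neg_of_pos (hCneg hC) (hDpos hD)]

namespace PairSatoTateEquidistributed

lemma hasNaturalDensity_sameSignSet (hST : PairSatoTateEquidistributed C D)
    (hε₀ : 0 < ε) (hε₁ : ε ≤ 1) :
    HasNaturalDensity (sameSignSet C D ε) (2 * (muST (Icc ε 1)).toReal ^ 2) := by
  have hpos : HasNaturalDensity _ _ := hST ε 1 ε 1 (by linarith) hε₁ le_rfl (by linarith) hε₁ le_rfl
  have hneg : HasNaturalDensity _ _ :=
    hST (-1) (-ε) (-1) (-ε) le_rfl (by linarith) (by linarith) le_rfl (by linarith) (by linarith)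
  rw [muST_Icc_neg_toReal (by linarith) hε₁ le_rfl] at hneg
  rw [sq, two_mul]
  exact hpos.union hneg (Set.disjoint_left.2 fun p hp hq => by linarith [hp.1.1, hq.1.2])

lemma hasNaturalDensity_oppositeSignSet (hST : PairSatoTateEquidistributed C D)
    (hε₀ : 0 < ε) (hε₁ : ε ≤ 1) :
    HasNaturalDensity (oppositeSignSet C D ε) (2 * (muST (Icc ε 1)).toReal ^ 2) := by
  have hpn : HasNaturalDensity _ _ :=
    hST ε 1 (-1) (-ε) (by linarith) hε₁ le_rfl le_rfl (by linarith) (by linarith)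
  have hnp : HasNaturalDensity _ _ :=
    hST (-1) (-ε) ε 1 le_rfl (by linarith) (by linarith) (by linarith) hε₁ le_rfl
  rw [muST_Icc_neg_toReal (by linarith) hε₁ le_rfl] at hpn hnp
  rw [sq, two_mul]
  exact hpn.union hnp (Set.disjoint_left.2 fun p hp hq => by linarith [hp.1.1, hq.1.2])

lemma eventually_hasNaturalDensity_signSets (hST : PairSatoTateEquidistributed C D) :
    ∀ᶠ ε in 𝓝[>] 0, 0 < ε ∧
      HasNaturalDensity (sameSignSet C D ε) (2 * (muST (Icc ε 1)).toReal ^ 2) ∧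
      HasNaturalDensity (oppositeSignSet C D ε) (2 * (muST (Icc ε 1)).toReal ^ 2) := by
  filter_upwards [Ioo_mem_nhdsGT one_pos] with ε ⟨hε₀, hε₁⟩
  exact ⟨hε₀, hST.hasNaturalDensity_sameSignSet hε₀ hε₁.le,
    hST.hasNaturalDensity_oppositeSignSet hε₀ hε₁.le⟩

variable {e₁ e₂ : ℕ → ℝ}

theorem hasNaturalDensity_mul_sub_pos (hST : PairSatoTateEquidistributed C D)
    (h₁ : Tendsto e₁ atTop (𝓝 0)) (h₂ : Tendsto e₂ atTop (𝓝 0)) :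
    HasNaturalDensity {p | 0 < (C p - e₁ p) * (D p - e₂ p)} (1 / 2) := by
  have hm := tendsto_muST_Icc_one
  refine hasNaturalDensity_of_squeeze (l := fun ε => 2 * (muST (Icc ε 1)).toReal ^ 2)
    (u := fun ε => 1 - 2 * (muST (Icc ε 1)).toReal ^ 2)
    (by convert (hm.pow 2).const_mul 2 using 2; norm_num)
    (by convert ((hm.pow 2).const_mul 2).const_sub 1 using 2; norm_num) ?_ ?_
  · filter_upwards [hST.eventually_hasNaturalDensity_signSets] with ε ⟨hε, hsame, _⟩ a ha
    exact hsame.eventually_lt_primeProportion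
      ((eventually_mul_sub_pos_and_neg h₁ h₂ hε).mono fun p hp _ => hp.1) ha
  · filter_upwards [hST.eventually_hasNaturalDensity_signSets] with ε ⟨hε, _, hopp⟩ b hb
    exact hopp.eventually_primeProportion_lt
      ((eventually_mul_sub_pos_and_neg h₁ h₂ hε).mono fun p hp _ hq => (hp.2 hq).asymm) hb

theorem hasNaturalDensity_mul_sub_eq_zero (hST : PairSatoTateEquidistributed C D)
    (h₁ : Tendsto e₁ atTop (𝓝 0)) (h₂ : Tendsto e₂ atTop (𝓝 0)) :
    HasNaturalDensity {p | (C p - e₁ p) * (D p - e₂ p) = 0} 0 := by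
  have hm := tendsto_muST_Icc_one
  refine hasNaturalDensity_of_squeeze (l := fun _ => 0)
    (u := fun ε => 1 - 4 * (muST (Icc ε 1)).toReal ^ 2) tendsto_const_nhds
    (by convert ((hm.pow 2).const_mul 4).const_sub 1 using 2; norm_num)
    (.of_forall fun _ a ha => .of_forall fun x => ha.trans_le (primeProportion_nonneg _ x)) ?_
  filter_upwards [hST.eventually_hasNaturalDensity_signSets] with ε ⟨hε, hsame, hopp⟩ b hb
  have hsign := eventually_mul_sub_pos_and_neg (C := C) (D := D) h₁ h₂ hε
  refine (hsame.union hopp (disjoint_sameSignSet_oppositeSignSet hε)).eventually_primeProportion_lt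
    (hsign.mono fun p hp _ hq => ?_) (by linarith)
  rcases hq with hq | hq
  exacts [(hp.1 hq).ne', (hp.2 hq).ne]

end PairSatoTateEquidistributed

end SignSets

theorem density_half_product_pos_and_zero_general (C D : ℕ → ℝ) (χ₁ χ₂ : ℕ → ℝ)
    (hχ₁ : ∀ p : ℕ, χ₁ p = -1 ∨ χ₁ p = 0 ∨ χ₁ p = 1)
    (hχ₂ : ∀ p : ℕ, χ₂ p = -1 ∨ χ₂ p = 0 ∨ χ₂ p = 1)
    (hST : PairSatoTateEquidistributed C D) :
    HasNaturalDensity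
        {p | 0 < (C p - χ₁ p / (2 * Real.sqrt p)) * (D p - χ₂ p / (2 * Real.sqrt p))}
        (1 / 2) ∧
      HasNaturalDensity
        {p | (C p - χ₁ p / (2 * Real.sqrt p)) * (D p - χ₂ p / (2 * Real.sqrt p)) = 0}
        0 := by
  have hpert : ∀ χ : ℕ → ℝ, (∀ p, χ p = -1 ∨ χ p = 0 ∨ χ p = 1) →
      Tendsto (fun p : ℕ => χ p / (2 * √p)) atTop (𝓝 0) := fun χ hχ =>
    tendsto_div_two_sqrt_atTop fun p => by rcases hχ p with h | h | h <;> simp [h]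
  exact ⟨hST.hasNaturalDensity_mul_sub_pos (hpert χ₁ hχ₁) (hpert χ₂ hχ₂),
    hST.hasNaturalDensity_mul_sub_eq_zero (hpert χ₁ hχ₁) (hpert χ₂ hχ₂)⟩

theorem density_half_product_pos_and_zero (C D : ℕ → ℝ) (χ₁ χ₂ : ℕ → ℝ)
    (hC : ∀ p : ℕ, p.Prime → C p ∈ Icc (-1 : ℝ) 1)
    (hD : ∀ p : ℕ, p.Prime → D p ∈ Icc (-1 : ℝ) 1)
    (hχ₁ : ∀ p : ℕ, χ₁ p = -1 ∨ χ₁ p = 0 ∨ χ₁ p = 1)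
    (hχ₂ : ∀ p : ℕ, χ₂ p = -1 ∨ χ₂ p = 0 ∨ χ₂ p = 1)
    (hST : PairSatoTateEquidistributed C D) :
    HasNaturalDensity
        {p | 0 < (C p - χ₁ p / (2 * Real.sqrt p)) * (D p - χ₂ p / (2 * Real.sqrt p))}
        (1 / 2) ∧
      HasNaturalDensity
        {p | (C p - χ₁ p / (2 * Real.sqrt p)) * (D p - χ₂ p / (2 * Real.sqrt p)) = 0}
        0 :=
  density_half_product_pos_and_zero_general C D χ₁ χ₂ hχ₁ hχ₂ hST
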